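/- Let r ≥ 1 and s ∈ ℝ^r, and define k_s(θ) = −Σ_{k=1}^r s_k (log m_k(θ) − log m_{k−1}(θ)) on the open subset of positive definite matrices of Sym_r. Then k_s is twice Fréchet differentiable, and at every positive definite θ its second derivative is the bilinear map on Sym_r × Sym_r given by (K, L) ↦ Σ_{k=1}^r s_k [ tr((θ_{[k]})⁻¹ K_{[k]} (θ_{[k]})⁻¹ L_{[k]}) − tr((θ_{[k−1]})⁻¹ K_{[k−1]} (θ_{[k−1]})⁻¹ L_{[k−1]}) ], where A_{[k]} denotes the top-left k×k submatrix of A and the terms with k−1 = 0 are interpreted as 0. -/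

import Mathlib

open Matrix

/-- Coordinates on the real vector space `Sym_r` of symmetric `r × r` matrices:
the on-and-above-diagonal positions. -/
abbrev SymIdx (r : ℕ) := {p : Fin r × Fin r // p.1 ≤ p.2}

/-- The symmetric matrix with the given on-and-above-diagonal coordinates. -/
def symOf {r : ℕ} (x : SymIdx r → ℝ) : Matrix (Fin r) (Fin r) ℝ :=
  Matrix.of fun i j =>
    if h : i ≤ j then x ⟨(i, j), h⟩ else x ⟨(j, i), (le_total i j).resolve_left h⟩

lemma symOf_add {r : ℕ} (x y : SymIdx r → ℝ) : symOf (x + y) = symOf x + symOf y := by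
  ext i j; by_cases h : i ≤ j <;> simp [symOf, h]

lemma symOf_smul {r : ℕ} (c : ℝ) (x : SymIdx r → ℝ) : symOf (c • x) = c • symOf x := by
  ext i j; by_cases h : i ≤ j <;> simp [symOf, h]

/-- The top-left `k × k` submatrix. -/
def trunc {r : ℕ} (k : ℕ) (h : k ≤ r) (M : Matrix (Fin r) (Fin r) ℝ) :
    Matrix (Fin k) (Fin k) ℝ :=
  M.submatrix (Fin.castLE h) (Fin.castLE h)

/-- The bilinear form `(K, L) ↦ tr(M K_{[k]} M L_{[k]})` on `Sym_r` (in coordinates). -/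
noncomputable def trTruncBForm {r : ℕ} (k : ℕ) (h : k ≤ r)
    (M : Matrix (Fin k) (Fin k) ℝ) :
    (SymIdx r → ℝ) →ₗ[ℝ] (SymIdx r → ℝ) →ₗ[ℝ] ℝ :=
  LinearMap.mk₂ ℝ
    (fun K L => (M * trunc k h (symOf K) * M * trunc k h (symOf L)).trace)
    (fun K K' L => by
      simp [symOf_add, trunc, Matrix.submatrix_add, Matrix.mul_add, Matrix.add_mul])
    (fun c K L => by
      simp [symOf_smul, trunc, Matrix.submatrix_smul, Matrix.mul_smul, Matrix.smul_mul])
    (fun K L L' => by simp [symOf_add, trunc, Matrix.submatrix_add, Matrix.mul_add])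
    (fun c K L => by simp [symOf_smul, trunc, Matrix.submatrix_smul, Matrix.mul_smul])

/-- The bilinear form `(K, L) ↦ tr(M K_{[k]} M L_{[k]})`, as a continuous bilinear map. -/
noncomputable def trTruncBCLM {r : ℕ} (k : ℕ) (h : k ≤ r)
    (M : Matrix (Fin k) (Fin k) ℝ) :
    (SymIdx r → ℝ) →L[ℝ] (SymIdx r → ℝ) →L[ℝ] ℝ :=
  LinearMap.toContinuousLinearMap
    ((LinearMap.toContinuousLinearMap (E := SymIdx r → ℝ) (F' := ℝ)).toLinearMap ∘ₗ
      trTruncBForm k h M)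

/-- The cumulant-type function `k_s(θ) = −Σ_{k=1}^r s_k (log m_k(θ) − log m_{k−1}(θ))`,
where `k : Fin r` is the 0-indexed version of the index `k+1 ∈ {1,…,r}`. -/
noncomputable def ks {r : ℕ} (s : Fin r → ℝ) (X : SymIdx r → ℝ) : ℝ :=
  -∑ k : Fin r, s k *
    (Real.log (trunc ((k : ℕ) + 1) k.isLt (symOf X)).det -
      Real.log (trunc (k : ℕ) k.isLt.le (symOf X)).det)

/-!
Each summand of `k_s` is `log det` composed with a truncation `θ ↦ θ_{[k]}`, which is linear in
`θ`. Writing `det (A + tH) = det A · det (1 + t A⁻¹H)` and expanding `det (1 + tM)` to first order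
gives Jacobi's formula, hence `d(log det)_A H = tr (A⁻¹ H)`. Differentiating this once more with
`d(A⁻¹) H = -A⁻¹ H A⁻¹` produces the forms `tr (A⁻¹ K A⁻¹ L)`. For positive definite `θ` every
`det θ_{[k]}` is positive, and nonvanishing of these determinants is an open condition, so the
first derivative is given by the explicit formula on a whole neighbourhood of `θ` and can be
differentiated there.
-/

attribute [local instance] Matrix.linftyOpNormedRing Matrix.linftyOpNormedAlgebra
-- Otherwise `Matrix n n 𝕜 →L[𝕜] _` is elaborated with the product topology, which agrees with the
-- operator-norm topology only after unfolding `Matrix`, so terms mixing the two cannot be rewritten.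
attribute [-instance] instTopologicalSpaceMatrix Matrix.instUniformSpace

section MatrixCalculus

variable {𝕜 n : Type*} [NontriviallyNormedField 𝕜] [Fintype n] [DecidableEq n]

theorem differentiable_det : Differentiable 𝕜 (det : Matrix n n 𝕜 → 𝕜) := by
  rw [funext det_apply]
  fun_prop

theorem hasDerivAt_det_one_add_smul (M : Matrix n n 𝕜) :
    HasDerivAt (fun t : 𝕜 => (1 + t • M).det) M.trace 0 := by
  have h := (det (1 + (Polynomial.X : Polynomial 𝕜) • M.map Polynomial.C)).hasDerivAt 0
  rw [derivative_det_one_add_X_smul] at h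
  refine h.congr_of_eventuallyEq (Filter.Eventually.of_forall fun t => ?_)
  dsimp only
  rw [← Polynomial.coe_evalRingHom, RingHom.map_det]
  congr 1
  ext i j
  by_cases hij : i = j <;> simp [hij] <;> ring

variable [CompleteSpace 𝕜]

variable (n) in
noncomputable def traceMul : Matrix n n 𝕜 →L[𝕜] Matrix n n 𝕜 →L[𝕜] 𝕜 :=
  ContinuousLinearMap.compL 𝕜 _ _ 𝕜 (traceLinearMap n 𝕜 𝕜).toContinuousLinearMap ∘L
    ContinuousLinearMap.mul 𝕜 _

@[simp]
theorem traceMul_apply (N H : Matrix n n 𝕜) : traceMul n N H = (N * H).trace := rfl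

theorem hasFDerivAt_det {A : Matrix n n 𝕜} (hA : A.det ≠ 0) :
    HasFDerivAt det (A.det • traceMul n A⁻¹) A := by
  have hf := (differentiable_det A).hasFDerivAt
  refine hf.congr_fderiv ?_
  ext H
  have hline : HasDerivAt (fun t : 𝕜 => A + t • H) H 0 :=
    (((hasDerivAt_id' (0 : 𝕜)).smul_const H).const_add A).congr_deriv (one_smul 𝕜 H)
  have hfactor : (fun t : 𝕜 => (A + t • H).det) = fun t => A.det * (1 + t • (A⁻¹ * H)).det := by
    funext t
    rw [← det_mul, mul_add, mul_one, mul_smul_comm, mul_nonsing_inv_cancel_left _ _ hA.isUnit]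
  have hjacobi := (hasDerivAt_det_one_add_smul (A⁻¹ * H)).const_mul A.det
  rw [← hfactor] at hjacobi
  simpa using (hjacobi.unique (hf.comp_hasDerivAt_of_eq 0 hline (by simp))).symm

theorem hasFDerivAt_nonsing_inv {A : Matrix n n 𝕜} (hA : A.det ≠ 0) :
    HasFDerivAt (fun B : Matrix n n 𝕜 => B⁻¹) (-ContinuousLinearMap.mulLeftRight 𝕜 _ A⁻¹ A⁻¹)
      A := by
  obtain ⟨u, rfl⟩ := (isUnit_iff_isUnit_det A).2 hA.isUnit
  have : CompleteSpace (Matrix n n 𝕜) := FiniteDimensional.complete 𝕜 _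
  simpa only [nonsing_inv_eq_ringInverse, Ring.inverse_unit, ← coe_units_inv]
    using hasFDerivAt_ringInverse (𝕜 := 𝕜) u

variable {E : Type*} [NormedAddCommGroup E] [NormedSpace 𝕜 E] (T : E →L[𝕜] Matrix n n 𝕜)

noncomputable def traceSandwich (M : Matrix n n 𝕜) : E →L[𝕜] E →L[𝕜] 𝕜 :=
  (traceMul n ∘L ContinuousLinearMap.mulLeftRight 𝕜 _ M M).bilinearComp T T

@[simp]
theorem traceSandwich_apply (M : Matrix n n 𝕜) (K L : E) :
    traceSandwich T M K L = (M * T K * M * T L).trace := rfl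

theorem hasFDerivAt_traceMul_inv_comp {x : E} (hx : (T x).det ≠ 0) :
    HasFDerivAt (fun y => (traceMul n (T y)⁻¹).comp T) (-traceSandwich T (T x)⁻¹) x := by
  have hinv := (hasFDerivAt_nonsing_inv hx).comp x T.hasFDerivAt
  refine (((traceMul n).bilinearComp (.id 𝕜 _) T).hasFDerivAt.comp x hinv).congr_fderiv ?_
  ext K L
  simp

end MatrixCalculus

section LogDet

variable {n : Type*} [Fintype n] [DecidableEq n]

theorem hasFDerivAt_log_det {A : Matrix n n ℝ} (hA : A.det ≠ 0) :
    HasFDerivAt (fun B : Matrix n n ℝ => Real.log B.det) (traceMul n A⁻¹) A := by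
  refine ((Real.hasDerivAt_log hA).comp_hasFDerivAt A (hasFDerivAt_det hA)).congr_fderiv ?_
  ext H
  simp [hA]

theorem hasFDerivAt_log_det_comp {E : Type*} [NormedAddCommGroup E] [NormedSpace ℝ E]
    (T : E →L[ℝ] Matrix n n ℝ) {x : E} (hx : (T x).det ≠ 0) :
    HasFDerivAt (fun y => Real.log (T y).det) ((traceMul n (T x)⁻¹).comp T) x :=
  (hasFDerivAt_log_det hx).comp x T.hasFDerivAt

end LogDet

section Truncation

variable {r : ℕ}

noncomputable def truncCLM (k : ℕ) (h : k ≤ r) :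
    (SymIdx r → ℝ) →L[ℝ] Matrix (Fin k) (Fin k) ℝ :=
  LinearMap.toContinuousLinearMap
    { toFun := fun x => trunc k h (symOf x)
      map_add' := fun x y => by simp [symOf_add, trunc, submatrix_add]
      map_smul' := fun c x => by simp [symOf_smul, trunc, submatrix_smul] }

theorem trTruncBCLM_eq_traceSandwich (k : ℕ) (h : k ≤ r) (M : Matrix (Fin k) (Fin k) ℝ) :
    trTruncBCLM k h M = traceSandwich (truncCLM k h) M :=
  rfl

theorem det_trunc_ne_zero {k : ℕ} (h : k ≤ r) {M : Matrix (Fin r) (Fin r) ℝ} (hM : M.PosDef) :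
    (trunc k h M).det ≠ 0 :=
  (hM.submatrix (Fin.castLE_injective h)).det_pos.ne'

theorem eventually_det_trunc_ne_zero {θ : SymIdx r → ℝ}
    (hθ : ∀ k (h : k ≤ r), (trunc k h (symOf θ)).det ≠ 0) :
    ∀ᶠ x in nhds θ, ∀ k (h : k ≤ r), (trunc k h (symOf x)).det ≠ 0 := by
  have hk : ∀ k : Fin (r + 1), ∀ᶠ x in nhds θ, (trunc k k.is_le (symOf x)).det ≠ 0 := fun k =>
    (differentiable_det.continuous.comp (truncCLM k k.is_le).continuous).continuousAt.eventually_ne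
      (hθ k k.is_le)
  filter_upwards [Filter.eventually_all.2 hk] with x hx k h
  exact hx ⟨k, Nat.lt_succ_of_le h⟩

end Truncation

section CumulantFunction

variable {r : ℕ} (s : Fin r → ℝ)

noncomputable def ksDeriv (x : SymIdx r → ℝ) : (SymIdx r → ℝ) →L[ℝ] ℝ :=
  -∑ k : Fin r, s k •
    ((traceMul _ (truncCLM ((k : ℕ) + 1) k.isLt x)⁻¹).comp (truncCLM ((k : ℕ) + 1) k.isLt) -
      (traceMul _ (truncCLM (k : ℕ) k.isLt.le x)⁻¹).comp (truncCLM (k : ℕ) k.isLt.le))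

theorem hasFDerivAt_ks {x : SymIdx r → ℝ}
    (hx : ∀ k (h : k ≤ r), (trunc k h (symOf x)).det ≠ 0) :
    HasFDerivAt (ks s) (ksDeriv s x) x := by
  have hlog (k : ℕ) (h : k ≤ r) :
      HasFDerivAt (fun y => Real.log (trunc k h (symOf y)).det)
        ((traceMul _ (truncCLM k h x)⁻¹).comp (truncCLM k h)) x :=
    hasFDerivAt_log_det_comp (truncCLM k h) (hx k h)
  exact (HasFDerivAt.fun_sum fun k _ =>
    ((hlog _ k.isLt).sub (hlog _ k.isLt.le)).const_mul (s k)).neg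

theorem hasFDerivAt_ksDeriv {θ : SymIdx r → ℝ}
    (hθ : ∀ k (h : k ≤ r), (trunc k h (symOf θ)).det ≠ 0) :
    HasFDerivAt (ksDeriv s)
      (∑ k : Fin r, s k •
        (trTruncBCLM ((k : ℕ) + 1) k.isLt (trunc ((k : ℕ) + 1) k.isLt (symOf θ))⁻¹ -
          trTruncBCLM (k : ℕ) k.isLt.le (trunc (k : ℕ) k.isLt.le (symOf θ))⁻¹)) θ := by
  refine (HasFDerivAt.fun_sum fun k _ =>
    ((hasFDerivAt_traceMul_inv_comp _ (hθ _ k.isLt)).sub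
      (hasFDerivAt_traceMul_inv_comp _ (hθ _ k.isLt.le))).const_smul (s k)).neg.congr_fderiv ?_
  rw [← Finset.sum_neg_distrib]
  refine Finset.sum_congr rfl fun k _ => ?_
  rw [← smul_neg, neg_sub_neg, neg_sub, trTruncBCLM_eq_traceSandwich,
    trTruncBCLM_eq_traceSandwich]
  rfl

end CumulantFunction

theorem hasFDerivAt_fderiv_ks_general (r : ℕ) (s : Fin r → ℝ) :
    ∀ θ : SymIdx r → ℝ, (symOf θ).PosDef →
      DifferentiableAt ℝ (ks s) θ ∧
      HasFDerivAt (fderiv ℝ (ks s))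
        (∑ k : Fin r, s k •
          (trTruncBCLM ((k : ℕ) + 1) k.isLt
              (trunc ((k : ℕ) + 1) k.isLt (symOf θ))⁻¹ -
            trTruncBCLM (k : ℕ) k.isLt.le (trunc (k : ℕ) k.isLt.le (symOf θ))⁻¹)) θ := by
  intro θ hθ
  have hdet : ∀ k (h : k ≤ r), (trunc k h (symOf θ)).det ≠ 0 := fun _ h => det_trunc_ne_zero h hθ
  refine ⟨(hasFDerivAt_ks s hdet).differentiableAt,
    (hasFDerivAt_ksDeriv s hdet).congr_of_eventuallyEq ?_⟩
  filter_upwards [eventually_det_trunc_ne_zero hdet] with x hx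
  exact (hasFDerivAt_ks s hx).fderiv

/-- On the open set of positive definite matrices in `Sym_r`
(realized via on-and-above-diagonal coordinates), `k_s` is twice Fréchet differentiable,
and its second derivative at `θ` is the bilinear map
`(K, L) ↦ Σ_{k=1}^r s_k [tr((θ_{[k]})⁻¹ K_{[k]} (θ_{[k]})⁻¹ L_{[k]})
  − tr((θ_{[k−1]})⁻¹ K_{[k−1]} (θ_{[k−1]})⁻¹ L_{[k−1]})]`
(for `k − 1 = 0` the corresponding term involves `0 × 0` matrices, so it is `0`). -/
theorem hasFDerivAt_fderiv_ks (r : ℕ) (hr : 1 ≤ r) (s : Fin r → ℝ) :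
    ∀ θ : SymIdx r → ℝ, (symOf θ).PosDef →
      DifferentiableAt ℝ (ks s) θ ∧
      HasFDerivAt (fderiv ℝ (ks s))
        (∑ k : Fin r, s k •
          (trTruncBCLM ((k : ℕ) + 1) k.isLt
              (trunc ((k : ℕ) + 1) k.isLt (symOf θ))⁻¹ -
            trTruncBCLM (k : ℕ) k.isLt.le (trunc (k : ℕ) k.isLt.le (symOf θ))⁻¹)) θ :=
  hasFDerivAt_fderiv_ks_general r s
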